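/- Let 0 < p < 1, let I be a countable index set, and let x = (x_i)_{i∈I} ∈ ℓ^p(I). For n ≥ 1 let |x|_{(n)} denote the n-th largest value among (|x_i|)_{i∈I} (the n-th term of the decreasing rearrangement). Then there is a constant c_p depending only on p such that ∑_{i : |x_i| ≤ |x|_{(n)}} |x_i| ≤ c_p · ‖x‖_p · n^{−(1−p)/p} for every n ≥ 1. -/

import Mathlib

/-!
If at least `n` entries satisfy `t ≤ |x_i|`, then `n tᵖ ≤ ‖x‖ₚᵖ`; hence the `n`-th largest entry
`T` is at most `(‖x‖ₚᵖ / n)^{1/p}`. Every entry of the tail is at most `T`, so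
`|x_i| = |x_i|ᵖ |x_i|^{1-p} ≤ |x_i|ᵖ T^{1-p}`, and summing gives
`‖x‖ₚᵖ T^{1-p} ≤ ‖x‖ₚ n^{-(1-p)/p}`, i.e. the bound with `c_p = 1`.
-/

noncomputable section

/-- The `n`-th largest value among `(|x_i|)_{i ∈ I}` (the `n`-th term of the
decreasing rearrangement, counted with multiplicity):
the supremum of all `t > 0` such that at least `n` indices satisfy `t ≤ |x_i|`. -/
def nthLargest {I : Type*} (x : I → ℂ) (n : ℕ) : ℝ :=
  sSup {t : ℝ | 0 < t ∧ n ≤ Nat.card {i : I // t ≤ ‖x i‖}}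

open Real

theorem natCard_mul_le_tsum {I : Type*} {f : I → ℝ} (hf : 0 ≤ f) (hs : Summable f)
    (P : I → Prop) {c : ℝ} (hc : ∀ i, P i → c ≤ f i) :
    Nat.card {i // P i} * c ≤ ∑' i, f i := by
  cases finite_or_infinite {i // P i} with
  | inr hinf => simpa [Nat.card_eq_zero_of_infinite] using tsum_nonneg hf
  | inl hfin =>
    have := Fintype.ofFinite {i // P i}
    calc Nat.card {i // P i} * c = ∑ _i : {i // P i}, c := by simp
      _ ≤ ∑ i : {i // P i}, f i := Finset.sum_le_sum fun i _ => hc i i.2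
      _ = ∑' i : {i // P i}, f i := (tsum_fintype _).symm
      _ ≤ ∑' i, f i := hs.tsum_subtype_le f _ hf

theorem nthLargest_le {I : Type*} {x : I → ℂ} {p : ℝ} (hp : 0 < p)
    (hs : Summable fun i => ‖x i‖ ^ p) {n : ℕ} (hn : 0 < n) :
    nthLargest x n ≤ ((∑' i, ‖x i‖ ^ p) / n) ^ p⁻¹ := by
  have hS : 0 ≤ ∑' i, ‖x i‖ ^ p := tsum_nonneg fun i => by positivity
  refine Real.sSup_le (fun t ht => ?_) (by positivity)
  obtain ⟨ht, htn⟩ := ht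
  have hcard : Nat.card {i // t ≤ ‖x i‖} * t ^ p ≤ ∑' i, ‖x i‖ ^ p :=
    natCard_mul_le_tsum (fun i => by positivity) hs _
      fun i hi => rpow_le_rpow ht.le hi hp.le
  rw [le_rpow_inv_iff_of_pos ht.le (by positivity) hp, le_div_iff₀ (by positivity), mul_comm]
  exact le_trans (by gcongr) hcard

theorem le_rpow_mul_rpow_one_sub {a T p : ℝ} (ha : 0 ≤ a) (haT : a ≤ T) (hp0 : 0 ≤ p)
    (hp1 : p ≤ 1) : a ≤ a ^ p * T ^ (1 - p) :=
  calc a = a ^ p * a ^ (1 - p) := by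
        rw [← rpow_add_of_nonneg ha hp0 (by linarith), add_sub_cancel, rpow_one]
    _ ≤ a ^ p * T ^ (1 - p) := by gcongr

theorem tsum_subtype_le_tsum_rpow_mul {I : Type*} {a : I → ℝ} (ha : 0 ≤ a) {p : ℝ}
    (hp0 : 0 ≤ p) (hp1 : p ≤ 1) (hs : Summable fun i => a i ^ p) {T : ℝ} (hT : 0 ≤ T) :
    ∑' i : {i // a i ≤ T}, a i ≤ (∑' i, a i ^ p) * T ^ (1 - p) := by
  have hbound (i : {i // a i ≤ T}) : a i ≤ a i ^ p * T ^ (1 - p) :=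
    le_rpow_mul_rpow_one_sub (ha i) i.2 hp0 hp1
  have hs' : Summable fun i : {i // a i ≤ T} => a i ^ p * T ^ (1 - p) :=
    (hs.subtype _).mul_right _
  calc ∑' i : {i // a i ≤ T}, a i ≤ ∑' i : {i // a i ≤ T}, a i ^ p * T ^ (1 - p) :=
        (hs'.of_nonneg_of_le (fun i => ha i.1) hbound).tsum_le_tsum hbound hs'
    _ = (∑' i : {i // a i ≤ T}, a i ^ p) * T ^ (1 - p) := tsum_mul_right
    _ ≤ (∑' i, a i ^ p) * T ^ (1 - p) := by
        gcongr
        exact hs.tsum_subtype_le _ _ fun i => rpow_nonneg (ha i) p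

theorem mul_rpow_div_rpow_inv_rpow_one_sub {S m p : ℝ} (hS : 0 ≤ S) (hm : 0 < m) (hp : 0 < p) :
    S * ((S / m) ^ p⁻¹) ^ (1 - p) = S ^ (1 / p) * m ^ (-((1 - p) / p)) := by
  have hexp : 1 + p⁻¹ * (1 - p) = 1 / p := by field_simp; ring
  rw [← rpow_mul (div_nonneg hS hm.le), div_rpow hS hm.le, div_eq_mul_inv, ← rpow_neg hm.le,
    ← mul_assoc, ← rpow_one_add' hS (by rw [hexp]; positivity), hexp]
  ring_nf

theorem nterm_approximation_bound.{u} (p : ℝ) (hp0 : 0 < p) (hp1 : p < 1) :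
    ∃ c : ℝ, 0 < c ∧ ∀ (I : Type u) (_ : Countable I) (x : I → ℂ),
      (Summable fun i => ‖x i‖ ^ p) → ∀ n : ℕ, 1 ≤ n →
      (∑' i : {i : I // ‖x i‖ ≤ nthLargest x n}, ‖x (i : I)‖) ≤
        c * (∑' i, ‖x i‖ ^ p) ^ (1 / p) * (n : ℝ) ^ (-((1 - p) / p)) := by
  refine ⟨1, one_pos, fun I _ x hs n hn => ?_⟩
  have hS : 0 ≤ ∑' i, ‖x i‖ ^ p := tsum_nonneg fun i => by positivity
  have hn' : (0 : ℝ) < n := by exact_mod_cast hn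
  have hT : 0 ≤ nthLargest x n := Real.sSup_nonneg fun t ht => ht.1.le
  calc ∑' i : {i : I // ‖x i‖ ≤ nthLargest x n}, ‖x i‖
      ≤ (∑' i, ‖x i‖ ^ p) * nthLargest x n ^ (1 - p) :=
        tsum_subtype_le_tsum_rpow_mul (fun i => norm_nonneg (x i)) hp0.le hp1.le hs hT
    _ ≤ (∑' i, ‖x i‖ ^ p) * (((∑' i, ‖x i‖ ^ p) / n) ^ p⁻¹) ^ (1 - p) := by
        gcongr
        exact nthLargest_le hp0 hs hn
    _ = 1 * (∑' i, ‖x i‖ ^ p) ^ (1 / p) * (n : ℝ) ^ (-((1 - p) / p)) := by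
        rw [one_mul, mul_rpow_div_rpow_inv_rpow_one_sub hS hn' hp0]
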